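/- arXiv:2209.01468 — 8 statements merged into one kernel-verified Lean document; each statement's English description precedes it below -/
import Mathlib

section
/- Let μ be a probability measure on ℝ with μ((0,∞)) = 1, let g(x) = ∫ (ε/2)·exp(−ε·|x|) dμ(ε), and let M(t) = ∫ exp(t·ε) dμ(ε). Then for every q ∈ ℝ and all s, s′ with q ≤ s ≤ s′, the probability that the mechanism output q + W (where W has density g) lies in [s, s′] equals (1/2)·(M(−(s − q)) − M(−(s′ − q))); symmetrically, for s ≤ s′ ≤ q it equals (1/2)·(M(−(q − s′)) − M(−(q − s))). In particular the CDF of the output of a randomized-parameter Laplace mechanism is expressed in terms of the moment generating function of the distribution of 1/b. -/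
/-!
For `0 ≤ a ≤ b` and each `ε ≥ 0`, `∫_a^b (ε/2) e^{-εx} dx = (e^{-aε} - e^{-bε})/2 ∈ [0, 1/2]`.
This bound makes the kernel integrable on `[a, b] × μ`, so Fubini gives
`∫_a^b g = (M(-a) - M(-b))/2`. Both cases of the theorem reduce to this one: the first by
translating by `q`, the second by also reflecting, since `g` is even.
-/

open MeasureTheory Real Set intervalIntegral

lemma setIntegral_Icc_eq_intervalIntegral {E : Type*} [NormedAddCommGroup E] [NormedSpace ℝ E]
    (f : ℝ → E) {a b : ℝ} (hab : a ≤ b) : ∫ x in Icc a b, f x = ∫ x in a..b, f x := by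
  rw [integral_Icc_eq_integral_Ioc, integral_of_le hab]

lemma integral_half_mul_exp_neg_mul (ε a b : ℝ) :
    ∫ x in a..b, ε / 2 * exp (-(ε * x)) = 1 / 2 * (exp (-a * ε) - exp (-b * ε)) := by
  have hderiv : ∀ x : ℝ,
      HasDerivAt (fun y => -(1 / 2) * exp (-(ε * y))) (ε / 2 * exp (-(ε * x))) x := fun x =>
    ((((hasDerivAt_id' x).const_mul ε).fun_neg.exp).const_mul (-(1 / 2))).congr_deriv (by ring)
  rw [integral_eq_sub_of_hasDerivAt (fun x _ => hderiv x)
    ((by fun_prop : Continuous fun x => ε / 2 * exp (-(ε * x))).intervalIntegrable a b)]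
  ring_nf

section MixtureLaplace

variable {μ : Measure ℝ} [IsFiniteMeasure μ]

lemma integrable_exp_mul_of_nonpos (hμ : ∀ᵐ ε ∂μ, 0 ≤ ε) {t : ℝ} (ht : t ≤ 0) :
    Integrable (fun ε => exp (t * ε)) μ := by
  refine (integrable_const 1).mono' (by fun_prop) ?_
  filter_upwards [hμ] with ε hε
  rw [norm_of_nonneg (exp_pos _).le, exp_le_one_iff]
  exact mul_nonpos_of_nonpos_of_nonneg ht hε

lemma integrable_uncurry_half_mul_exp_neg_mul (hμ : ∀ᵐ ε ∂μ, 0 ≤ ε) {a b : ℝ}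
    (ha : 0 ≤ a) (hab : a ≤ b) :
    Integrable (Function.uncurry fun x ε : ℝ => ε / 2 * exp (-(ε * x)))
      ((volume.restrict (uIoc a b)).prod μ) := by
  have hcont : Continuous (Function.uncurry fun x ε : ℝ => ε / 2 * exp (-(ε * x))) := by
    fun_prop
  rw [integrable_prod_iff' hcont.aestronglyMeasurable]
  refine ⟨.of_forall fun ε => ?_, ?_⟩
  · rw [uIoc_of_le hab]
    exact (Continuous.integrableOn_Icc (by fun_prop)).mono_set Ioc_subset_Icc_self
  refine (integrable_const (1 / 2 : ℝ)).mono'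
    (hcont.stronglyMeasurable.norm.integral_prod_left').aestronglyMeasurable ?_
  filter_upwards [hμ] with ε hε
  have hnonneg : ∀ x, 0 ≤ ε / 2 * exp (-(ε * x)) := fun x => by positivity
  have hlower : exp (-b * ε) ≤ exp (-a * ε) := exp_le_exp.2 (by nlinarith)
  have hupper : exp (-a * ε) ≤ 1 := exp_le_one_iff.2 (by nlinarith)
  simp only [Function.uncurry_apply_pair, norm_of_nonneg (hnonneg _)]
  rw [uIoc_of_le hab, ← integral_of_le hab, integral_half_mul_exp_neg_mul,
    norm_of_nonneg (by linarith [exp_pos (-b * ε)])]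
  linarith [exp_pos (-b * ε)]

lemma intervalIntegral_integral_half_mul_exp_neg_mul_abs (hμ : ∀ᵐ ε ∂μ, 0 ≤ ε) {a b : ℝ}
    (ha : 0 ≤ a) (hab : a ≤ b) :
    ∫ x in a..b, ∫ ε, ε / 2 * exp (-(ε * |x|)) ∂μ =
      1 / 2 * (∫ ε, exp (-a * ε) ∂μ - ∫ ε, exp (-b * ε) ∂μ) :=
  calc ∫ x in a..b, ∫ ε, ε / 2 * exp (-(ε * |x|)) ∂μ
      = ∫ x in a..b, ∫ ε, ε / 2 * exp (-(ε * x)) ∂μ := by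
        refine integral_congr fun x hx => ?_
        rw [uIcc_of_le hab] at hx
        simp only [abs_of_nonneg (ha.trans hx.1)]
    _ = ∫ ε, (∫ x in a..b, ε / 2 * exp (-(ε * x))) ∂μ :=
        intervalIntegral_integral_swap (integrable_uncurry_half_mul_exp_neg_mul hμ ha hab)
    _ = ∫ ε, 1 / 2 * (exp (-a * ε) - exp (-b * ε)) ∂μ := by
        simp only [integral_half_mul_exp_neg_mul]
    _ = 1 / 2 * (∫ ε, exp (-a * ε) ∂μ - ∫ ε, exp (-b * ε) ∂μ) := by
        rw [MeasureTheory.integral_const_mul, integral_sub (integrable_exp_mul_of_nonpos hμ (by linarith))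
          (integrable_exp_mul_of_nonpos hμ (by linarith))]

end MixtureLaplace

/-- The CDF of the output of a randomized-parameter Laplace mechanism in terms of the
moment generating function `M` of the distribution `μ` of the reciprocal scale `1/b`:
for `q ≤ s ≤ s′`, `P(q + W ∈ [s, s′]) = (1/2)·(M(−(s−q)) − M(−(s′−q)))`, and symmetrically
for `s ≤ s′ ≤ q`, it equals `(1/2)·(M(−(q−s′)) − M(−(q−s)))`, where `W` has density `g`. -/
theorem mixture_laplace_cdf_via_mgf
    (μ : Measure ℝ) [IsProbabilityMeasure μ] (hμ : μ (Set.Ioi 0) = 1)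
    (g : ℝ → ℝ)
    (hg : ∀ x : ℝ, g x = ∫ ε, (ε / 2) * Real.exp (-(ε * |x|)) ∂μ)
    (M : ℝ → ℝ)
    (hM : ∀ t : ℝ, M t = ∫ ε, Real.exp (t * ε) ∂μ) :
    ∀ q s s' : ℝ,
      (q ≤ s → s ≤ s' →
        ∫ x in Set.Icc s s', g (x - q) = (1 / 2) * (M (-(s - q)) - M (-(s' - q)))) ∧
      (s ≤ s' → s' ≤ q →
        ∫ x in Set.Icc s s', g (x - q) = (1 / 2) * (M (-(q - s')) - M (-(q - s)))) := by
  intro q s s'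
  have hμ_nonneg : ∀ᵐ ε ∂μ, 0 ≤ ε := by
    filter_upwards [(mem_ae_iff_prob_eq_one measurableSet_Ioi).2 hμ] with ε hε using le_of_lt hε
  have hcdf : ∀ a b, 0 ≤ a → a ≤ b → ∫ x in a..b, g x = 1 / 2 * (M (-a) - M (-b)) := by
    intro a b ha hab
    simp only [hg, hM]
    exact intervalIntegral_integral_half_mul_exp_neg_mul_abs hμ_nonneg ha hab
  refine ⟨fun hqs hss => ?_, fun hss hs'q => ?_⟩
  · rw [setIntegral_Icc_eq_intervalIntegral _ hss, integral_comp_sub_right g q]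
    exact hcdf _ _ (sub_nonneg.2 hqs) (by linarith)
  · have hsymm : ∀ x, g (x - q) = g (q - x) := fun x => by rw [hg, hg, abs_sub_comm]
    rw [setIntegral_Icc_eq_intervalIntegral _ hss]
    simp only [hsymm]
    rw [integral_comp_sub_left g q]
    exact hcdf _ _ (sub_nonneg.2 hs'q) (by linarith)
end

section
/- Let μ be a probability measure on ℝ with μ((0,∞)) = 1 and ∫ ε dμ(ε) < ∞, let g(x) = ∫ (ε/2)·exp(−ε·|x|) dμ(ε), and let Δq > 0. Set ε₀ = ln[ (∫ ε dμ(ε)) / (∫ ε·exp(−ε·Δq) dμ(ε)) ]. Then the mixture Laplace mechanism is ε₀-differentially private: for every measurable set S ⊆ ℝ and all a, a′ ∈ ℝ with |a − a′| ≤ Δq, ∫_S g(x − a) dx ≤ exp(ε₀) · ∫_S g(x − a′) dx. (Equivalently, the Randomized DP Laplace mechanism is ln[ E(1/b) / M′_{1/b}(−Δq) ]-differentially private, where M′_{1/b}(−Δq) = ∫ ε·exp(−ε·Δq) dμ(ε) is the derivative of the MGF of 1/b at −Δq.) -/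
open MeasureTheory Real

section Aux

variable {μ : Measure ℝ} [IsProbabilityMeasure μ]

lemma mixlap_ae_pos (hμ : μ (Set.Ioi 0) = 1) : ∀ᵐ ε ∂μ, 0 < ε := by
  rw [ae_iff]
  have h : {ε : ℝ | ¬ 0 < ε} = (Set.Ioi 0)ᶜ := by ext x; simp
  rw [h, measure_compl measurableSet_Ioi (measure_ne_top μ _), hμ, measure_univ]
  simp

lemma mixlap_integ (hμ : μ (Set.Ioi 0) = 1) (hint : Integrable (fun ε : ℝ => ε) μ)
    {t : ℝ} (ht : 0 ≤ t) :
    Integrable (fun ε : ℝ => ε * Real.exp (-(ε * t))) μ := by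
  refine hint.mono ?_ ?_
  · exact (continuous_id.mul
      (((continuous_id.mul continuous_const).neg).rexp)).aestronglyMeasurable
  · filter_upwards [mixlap_ae_pos hμ] with ε hε
    have h1 : Real.exp (-(ε * t)) ≤ 1 := by
      rw [Real.exp_le_one_iff]
      have : 0 ≤ ε * t := mul_nonneg hε.le ht
      linarith
    simp only [Real.norm_eq_abs]
    rw [abs_mul, abs_of_pos (Real.exp_pos _)]
    calc |ε| * Real.exp (-(ε * t)) ≤ |ε| * 1 :=
          mul_le_mul_of_nonneg_left h1 (abs_nonneg _)
      _ = |ε| := mul_one _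

lemma mixlap_pos (hμ : μ (Set.Ioi 0) = 1) (hint : Integrable (fun ε : ℝ => ε) μ)
    {t : ℝ} (ht : 0 ≤ t) :
    0 < ∫ ε, ε * Real.exp (-(ε * t)) ∂μ := by
  have hI := mixlap_integ hμ hint ht
  have hnn : 0 ≤ᵐ[μ] fun ε : ℝ => ε * Real.exp (-(ε * t)) := by
    filter_upwards [mixlap_ae_pos hμ] with ε hε
    positivity
  rw [integral_pos_iff_support_of_nonneg_ae hnn hI]
  have hsub : Set.Ioi (0:ℝ) ⊆ Function.support fun ε : ℝ => ε * Real.exp (-(ε * t)) := by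
    intro ε hε
    have : (0:ℝ) < ε * Real.exp (-(ε * t)) := by
      have : (0:ℝ) < ε := hε
      positivity
    exact ne_of_gt this
  calc (0:ENNReal) < 1 := by norm_num
    _ = μ (Set.Ioi 0) := hμ.symm
    _ ≤ _ := measure_mono hsub

lemma mixlap_mono (hμ : μ (Set.Ioi 0) = 1) (hint : Integrable (fun ε : ℝ => ε) μ)
    {t s : ℝ} (ht : 0 ≤ t) (hts : t ≤ s) :
    ∫ ε, ε * Real.exp (-(ε * s)) ∂μ ≤ ∫ ε, ε * Real.exp (-(ε * t)) ∂μ := by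
  refine integral_mono_ae (mixlap_integ hμ hint (ht.trans hts)) (mixlap_integ hμ hint ht) ?_
  filter_upwards [mixlap_ae_pos hμ] with ε hε
  have h1 : -(ε * s) ≤ -(ε * t) := by nlinarith
  exact mul_le_mul_of_nonneg_left (Real.exp_le_exp.mpr h1) hε.le

/-- Chebyshev correlation inequality for the weighted exponential moments. -/
lemma mixlap_cheb (hμ : μ (Set.Ioi 0) = 1) (hint : Integrable (fun ε : ℝ => ε) μ)
    {u v : ℝ} (hu : 0 ≤ u) (hv : 0 ≤ v) :
    (∫ ε, ε * Real.exp (-(ε * u)) ∂μ) * (∫ ε, ε * Real.exp (-(ε * v)) ∂μ)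
      ≤ (∫ ε, ε ∂μ) * (∫ ε, ε * Real.exp (-(ε * (u + v))) ∂μ) := by
  -- abbreviations
  set fu : ℝ → ℝ := fun ε => ε * Real.exp (-(ε * u)) with hfu
  set fv : ℝ → ℝ := fun ε => ε * Real.exp (-(ε * v)) with hfv
  set fuv : ℝ → ℝ := fun ε => ε * Real.exp (-(ε * (u + v))) with hfuv
  have hIu : Integrable fu μ := mixlap_integ hμ hint hu
  have hIv : Integrable fv μ := mixlap_integ hμ hint hv
  have hIuv : Integrable fuv μ := mixlap_integ hμ hint (by linarith)
  -- the product-measure function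
  set Φ : ℝ × ℝ → ℝ := fun p =>
    (p.1 * p.2) * ((Real.exp (-(p.1 * u)) - Real.exp (-(p.2 * u))) *
      (Real.exp (-(p.1 * v)) - Real.exp (-(p.2 * v)))) with hΦ
  have hae : ∀ᵐ p ∂(μ.prod μ), 0 < p.1 ∧ 0 < p.2 := by
    have h1 : ∀ᵐ p ∂(μ.prod μ), 0 < p.1 := by
      rw [ae_iff]
      have h : {p : ℝ × ℝ | ¬ 0 < p.1} = (Set.Ioi 0)ᶜ ×ˢ (Set.univ : Set ℝ) := by
        ext p; simp
      rw [h, Measure.prod_prod, measure_compl measurableSet_Ioi (measure_ne_top μ _), hμ,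
        measure_univ]
      simp
    have h2 : ∀ᵐ p ∂(μ.prod μ), 0 < p.2 := by
      rw [ae_iff]
      have h : {p : ℝ × ℝ | ¬ 0 < p.2} = (Set.univ : Set ℝ) ×ˢ (Set.Ioi 0)ᶜ := by
        ext p; simp
      rw [h, Measure.prod_prod, measure_compl measurableSet_Ioi (measure_ne_top μ _), hμ,
        measure_univ]
      simp
    exact h1.and h2
  have hnn : 0 ≤ ∫ p, Φ p ∂(μ.prod μ) := by
    refine integral_nonneg_of_ae ?_
    filter_upwards [hae] with p hp
    have hmul : 0 ≤ (Real.exp (-(p.1 * u)) - Real.exp (-(p.2 * u))) *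
        (Real.exp (-(p.1 * v)) - Real.exp (-(p.2 * v))) := by
      rcases le_total p.1 p.2 with h | h
      · have e1 : Real.exp (-(p.2 * u)) ≤ Real.exp (-(p.1 * u)) := by
          apply Real.exp_le_exp.mpr; nlinarith
        have e2 : Real.exp (-(p.2 * v)) ≤ Real.exp (-(p.1 * v)) := by
          apply Real.exp_le_exp.mpr; nlinarith
        exact mul_nonneg (by linarith) (by linarith)
      · have e1 : Real.exp (-(p.1 * u)) ≤ Real.exp (-(p.2 * u)) := by
          apply Real.exp_le_exp.mpr; nlinarith
        have e2 : Real.exp (-(p.1 * v)) ≤ Real.exp (-(p.2 * v)) := by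
          apply Real.exp_le_exp.mpr; nlinarith
        nlinarith [e1, e2]
    exact mul_nonneg (mul_nonneg hp.1.le hp.2.le) hmul
  -- expand Φ
  have hexpand : Φ = fun p : ℝ × ℝ =>
      fuv p.1 * p.2 - fu p.1 * fv p.2 - fv p.1 * fu p.2 + p.1 * fuv p.2 := by
    funext p
    simp only [hΦ, hfu, hfv, hfuv]
    rw [show -(p.1 * (u + v)) = -(p.1 * u) + -(p.1 * v) by ring,
      show -(p.2 * (u + v)) = -(p.2 * u) + -(p.2 * v) by ring,
      Real.exp_add, Real.exp_add]
    ring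
  have hT1 : Integrable (fun p : ℝ × ℝ => fuv p.1 * p.2) (μ.prod μ) := hIuv.mul_prod hint
  have hT2 : Integrable (fun p : ℝ × ℝ => fu p.1 * fv p.2) (μ.prod μ) := hIu.mul_prod hIv
  have hT3 : Integrable (fun p : ℝ × ℝ => fv p.1 * fu p.2) (μ.prod μ) := hIv.mul_prod hIu
  have hT4 : Integrable (fun p : ℝ × ℝ => p.1 * fuv p.2) (μ.prod μ) := hint.mul_prod hIuv
  have hval : ∫ p, Φ p ∂(μ.prod μ) =
      (∫ ε, fuv ε ∂μ) * (∫ ε, ε ∂μ) - (∫ ε, fu ε ∂μ) * (∫ ε, fv ε ∂μ)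
      - (∫ ε, fv ε ∂μ) * (∫ ε, fu ε ∂μ) + (∫ ε, ε ∂μ) * (∫ ε, fuv ε ∂μ) := by
    have hA : Integrable
        (fun p : ℝ × ℝ => fuv p.1 * p.2 - fu p.1 * fv p.2 - fv p.1 * fu p.2) (μ.prod μ) :=
      (hT1.sub hT2).sub hT3
    have hB : Integrable (fun p : ℝ × ℝ => fuv p.1 * p.2 - fu p.1 * fv p.2) (μ.prod μ) :=
      hT1.sub hT2
    simp only [hexpand]
    rw [integral_add hA hT4, integral_sub hB hT3,
      integral_sub hT1 hT2, integral_prod_mul, integral_prod_mul,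
      integral_prod_mul fuv (fun ε : ℝ => ε), integral_prod_mul (fun ε : ℝ => ε) fuv]
  rw [hval] at hnn
  nlinarith [hnn]

end Aux

lemma mixlap_arith {A B C D : ℝ} (hB : 0 < B) (h : A * B ≤ C * D) :
    A / 2 ≤ C / B * (D / 2) := by
  rw [div_mul_div_comm, div_le_div_iff₀ two_pos (by positivity)]
  nlinarith

/-- The Randomized DP Laplace mechanism is `ln[ E(1/b) / M′_{1/b}(−Δq) ]`-differentially
private, where `μ` is the distribution of the reciprocal scale `1/b` and
`M′_{1/b}(−Δq) = ∫ ε·exp(−ε·Δq) dμ(ε)`. -/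
theorem mixture_laplace_mechanism_dp
    (μ : Measure ℝ) [IsProbabilityMeasure μ] (hμ : μ (Set.Ioi 0) = 1)
    (hint : Integrable (fun ε : ℝ => ε) μ)
    (g : ℝ → ℝ)
    (hg : ∀ x : ℝ, g x = ∫ ε, (ε / 2) * Real.exp (-(ε * |x|)) ∂μ)
    (Δq : ℝ) (hΔq : 0 < Δq)
    (ε₀ : ℝ)
    (hε₀ : ε₀ = Real.log ((∫ ε, ε ∂μ) / (∫ ε, ε * Real.exp (-(ε * Δq)) ∂μ))) :
    ∀ S : Set ℝ, MeasurableSet S → ∀ a a' : ℝ, |a - a'| ≤ Δq →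
      ∫ x in S, g (x - a) ≤ Real.exp ε₀ * ∫ x in S, g (x - a') := by
  intro S hS a a' haa
  set H : ℝ → ℝ := fun t => ∫ ε, ε * Real.exp (-(ε * t)) ∂μ with hH
  have hH0 : H 0 = ∫ ε, ε ∂μ := by simp [hH]
  have hpos : ∀ t : ℝ, 0 ≤ t → 0 < H t := fun t ht => mixlap_pos hμ hint ht
  -- key inequality on H
  have hkey : ∀ u v : ℝ, 0 ≤ u → 0 ≤ v → v - Δq ≤ u → H u * H Δq ≤ H 0 * H v := by
    intro u v hu hv huv
    by_cases hcase : v ≤ Δq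
    · have h1 : H Δq ≤ H v := mixlap_mono hμ hint hv hcase
      have h2 : H u ≤ H 0 := mixlap_mono hμ hint le_rfl hu
      nlinarith [hpos u hu, hpos Δq hΔq.le, hpos 0 le_rfl, hpos v hv]
    · push_neg at hcase
      have hvq : 0 ≤ v - Δq := by linarith
      have h1 : H u ≤ H (v - Δq) := mixlap_mono hμ hint hvq huv
      have h2 : H (v - Δq) * H Δq ≤ H 0 * H ((v - Δq) + Δq) := by
        rw [hH0]
        exact mixlap_cheb hμ hint hvq hΔq.le
      rw [show (v - Δq) + Δq = v by ring] at h2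
      nlinarith [hpos Δq hΔq.le, hpos 0 le_rfl]
  -- g in terms of H
  have hgH : ∀ x : ℝ, g x = H |x| / 2 := by
    intro x
    rw [hg x, hH, ← integral_div]
    congr 1
    funext ε
    ring
  have hexp : Real.exp ε₀ = H 0 / H Δq := by
    rw [hε₀, ← hH0]
    exact Real.exp_log (div_pos (hpos 0 le_rfl) (hpos Δq hΔq.le))
  -- pointwise bounds
  have hpt : ∀ b b' : ℝ, |b - b'| ≤ Δq → ∀ x : ℝ, g (x - b) ≤ Real.exp ε₀ * g (x - b') := by
    intro b b' hbb x
    have htri : |x - b'| - Δq ≤ |x - b| := by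
      have h := abs_sub_abs_le_abs_sub (x - b') (x - b)
      have : (x - b') - (x - b) = b - b' := by ring
      rw [this] at h
      have : |b - b'| ≤ Δq := hbb
      linarith
    have hk := hkey |x - b| |x - b'| (abs_nonneg _) (abs_nonneg _) htri
    rw [hgH, hgH, hexp]
    exact mixlap_arith (hpos Δq hΔq.le) hk
  have hg0 : ∀ y : ℝ, 0 ≤ g y := by
    intro y
    rw [hg y]
    refine integral_nonneg_of_ae ?_
    filter_upwards [mixlap_ae_pos hμ] with ε hε
    positivity
  -- measurability of g
  have hgm : Measurable g := by
    have hF : StronglyMeasurable (fun p : ℝ × ℝ => p.2 / 2 * Real.exp (-(p.2 * |p.1|))) := by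
      apply Continuous.stronglyMeasurable
      fun_prop
    have := hF.integral_prod_right' (ν := μ)
    have hge : g = fun x => ∫ ε, ε / 2 * Real.exp (-(ε * |x|)) ∂μ := funext hg
    rw [hge]
    exact this.measurable
  have hmeas : ∀ b : ℝ, AEStronglyMeasurable (fun x => g (x - b)) (volume.restrict S) :=
    fun b => ((hgm.comp (measurable_id.sub_const b)).aestronglyMeasurable)
  by_cases hInt : IntegrableOn (fun x => g (x - a')) S volume
  · have hInt' : IntegrableOn (fun x => g (x - a)) S volume := by
      refine Integrable.mono (hInt.const_mul (Real.exp ε₀)) (hmeas a) ?_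
      refine Filter.Eventually.of_forall fun x => ?_
      simp only [Real.norm_eq_abs]
      rw [abs_of_nonneg (hg0 _), abs_of_nonneg (mul_nonneg (Real.exp_pos _).le (hg0 _))]
      exact hpt a a' haa x
    calc ∫ x in S, g (x - a) ≤ ∫ x in S, Real.exp ε₀ * g (x - a') :=
          integral_mono hInt' (hInt.const_mul _) (hpt a a' haa)
      _ = Real.exp ε₀ * ∫ x in S, g (x - a') := integral_const_mul _ _
  · have hInt'' : ¬ IntegrableOn (fun x => g (x - a)) S volume := by
      intro h
      apply hInt
      have haa' : |a' - a| ≤ Δq := by rwa [abs_sub_comm]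
      refine Integrable.mono (h.const_mul (Real.exp ε₀)) (hmeas a') ?_
      refine Filter.Eventually.of_forall fun x => ?_
      simp only [Real.norm_eq_abs]
      rw [abs_of_nonneg (hg0 _), abs_of_nonneg (mul_nonneg (Real.exp_pos _).le (hg0 _))]
      exact hpt a' a haa' x
    rw [integral_undef hInt'', integral_undef hInt]
    simp
end

section
/- Let μ be a probability measure on ℝ with μ((0,∞)) = 1, let g(x) = ∫ (ε/2)·exp(−ε·|x|) dμ(ε), let M(t) = ∫ exp(t·ε) dμ(ε), and let γ > 0. Then ∫_{−γ}^{γ} g(x) dx = 1 − M(−γ). (The usefulness of the Randomized DP Laplace mechanism, i.e., the probability that the noise has absolute value at most γ, equals 1 − M_{1/b}(−γ).) -/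
/-!
Each Laplace law of rate `ε > 0` gives `[-γ, γ]` mass `1 - exp (-γ ε)`, so by Fubini the mixture
gives it mass `1 - ∫ exp (-γ ε) dμ = 1 - M (-γ)`. Fubini applies because the inner integrals of
the (nonnegative) kernel are bounded by `1`.
-/

open MeasureTheory Real

theorem intervalIntegral.integral_symmetric_of_even {E : Type*} [NormedAddCommGroup E]
    [NormedSpace ℝ E] {f : ℝ → E} {a : ℝ} (hf : ∀ x, f (-x) = f x)
    (hint : IntervalIntegrable f volume 0 a) :
    ∫ x in -a..a, f x = (2 : ℝ) • ∫ x in 0..a, f x := by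
  have hneg : ∫ x in -a..0, f x = ∫ x in 0..a, f x := by
    simpa [hf] using (intervalIntegral.integral_comp_neg (a := 0) (b := a) f).symm
  have hint' : IntervalIntegrable f volume (-a) 0 := by
    simpa [hf] using (hint.comp_sub_left 0).symm
  rw [← intervalIntegral.integral_add_adjacent_intervals hint' hint, hneg, two_smul]

theorem integral_zero_to_mul_exp_neg_mul_abs {ε γ : ℝ} (hγ : 0 ≤ γ) :
    ∫ x in 0..γ, ε * exp (-(ε * |x|)) = 1 - exp (-γ * ε) := by
  have hderiv : ∀ x ∈ Set.Ioo 0 γ,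
      HasDerivAt (fun x => -exp (-(ε * x))) (ε * exp (-(ε * |x|))) x := by
    intro x hx
    rw [abs_of_pos hx.1]
    simpa [mul_comm] using (((hasDerivAt_id x).const_mul ε).fun_neg.exp).fun_neg
  rw [intervalIntegral.integral_eq_sub_of_hasDerivAt_of_le hγ (by fun_prop) hderiv
    (Continuous.intervalIntegrable (by fun_prop) _ _)]
  simp only [mul_zero, neg_zero, exp_zero, sub_neg_eq_add, neg_mul]
  ring_nf

theorem integral_laplace_density_Icc {ε γ : ℝ} (hγ : 0 ≤ γ) :
    ∫ x in Set.Icc (-γ) γ, ε / 2 * exp (-(ε * |x|)) = 1 - exp (-γ * ε) := by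
  rw [integral_Icc_eq_integral_Ioc, ← intervalIntegral.integral_of_le (by linarith),
    intervalIntegral.integral_symmetric_of_even (by simp)
      (Continuous.intervalIntegrable (by fun_prop) _ _),
    ← integral_zero_to_mul_exp_neg_mul_abs hγ, smul_eq_mul, ← intervalIntegral.integral_const_mul]
  congr 1; ext x; ring

section Mixture

variable {μ : Measure ℝ} [IsFiniteMeasure μ] {γ : ℝ}

theorem integrable_exp_neg_mul_of_ae_pos (hμ : ∀ᵐ ε ∂μ, 0 < ε) (hγ : 0 ≤ γ) :
    Integrable (fun ε => exp (-γ * ε)) μ := by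
  refine Integrable.of_bound (by fun_prop) 1 ?_
  filter_upwards [hμ] with ε hε
  rw [norm_of_nonneg (exp_nonneg _), exp_le_one_iff]
  nlinarith

theorem integrable_laplace_density_prod (hμ : ∀ᵐ ε ∂μ, 0 < ε) (hγ : 0 ≤ γ) :
    Integrable (Function.uncurry fun x ε => ε / 2 * exp (-(ε * |x|)))
      ((volume.restrict (Set.Icc (-γ) γ)).prod μ) := by
  refine (integrable_prod_iff' (by fun_prop)).2 ⟨.of_forall fun ε => ?_, ?_⟩
  · exact Continuous.integrableOn_Icc (by fun_prop)
  · refine ((integrable_const 1).sub (integrable_exp_neg_mul_of_ae_pos hμ hγ)).congr ?_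
    filter_upwards [hμ] with ε hε
    change 1 - exp (-γ * ε) = _
    rw [← integral_laplace_density_Icc hγ]
    refine integral_congr_ae (.of_forall fun x => ?_)
    have hnonneg : 0 ≤ ε / 2 * exp (-(ε * |x|)) := by positivity
    simp only [Function.uncurry_apply_pair, norm_of_nonneg hnonneg]

theorem integral_Icc_integral_laplace_density (hμ : ∀ᵐ ε ∂μ, 0 < ε) (hγ : 0 ≤ γ) :
    ∫ x in Set.Icc (-γ) γ, ∫ ε, ε / 2 * exp (-(ε * |x|)) ∂μ
      = μ.real Set.univ - ∫ ε, exp (-γ * ε) ∂μ := by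
  rw [integral_integral_swap (integrable_laplace_density_prod hμ hγ)]
  simp only [integral_laplace_density_Icc hγ]
  rw [integral_sub (integrable_const 1) (integrable_exp_neg_mul_of_ae_pos hμ hγ),
    integral_const, smul_eq_mul, mul_one]

end Mixture

/-- The usefulness of the Randomized DP Laplace mechanism (the probability that the added
noise has absolute value at most `γ`) equals `1 − M_{1/b}(−γ)`, where `M` is the moment
generating function of the distribution `μ` of the reciprocal scale `1/b`. -/
theorem mixture_laplace_usefulness
    (μ : Measure ℝ) [IsProbabilityMeasure μ] (hμ : μ (Set.Ioi 0) = 1)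
    (g : ℝ → ℝ)
    (hg : ∀ x : ℝ, g x = ∫ ε, (ε / 2) * Real.exp (-(ε * |x|)) ∂μ)
    (M : ℝ → ℝ)
    (hM : ∀ t : ℝ, M t = ∫ ε, Real.exp (t * ε) ∂μ)
    (γ : ℝ) (hγ : 0 < γ) :
    ∫ x in Set.Icc (-γ) γ, g x = 1 - M (-γ) := by
  have hpos : ∀ᵐ ε ∂μ, 0 < ε := mem_ae_iff.2 ((prob_compl_eq_zero_iff measurableSet_Ioi).2 hμ)
  simp only [hg, hM]
  rw [integral_Icc_integral_laplace_density hpos hγ.le, probReal_univ]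
end

section
/- Let μ be a probability measure on ℝ with μ((0,∞)) = 1 and ∫ (1/ε) dμ(ε) < ∞, let g(x) = ∫ (ε/2)·exp(−ε·|x|) dμ(ε), and let M(t) = ∫ exp(t·ε) dμ(ε). Then the expected ℓ₁ error of the mixture Laplace mechanism satisfies ∫_ℝ |x|·g(x) dx = ∫_0^∞ M(−x) dx. -/
/-!
Both sides equal `𝔼_μ[1/ε]`: for a fixed `ε > 0` the Laplace density `(ε/2)·exp(−ε|x|)` has
first absolute moment `1/ε`, and `∫_0^∞ exp(−xε) dx = 1/ε`; Tonelli exchanges the `x`- and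
`ε`-integrals. Working with lower Lebesgue integrals keeps the argument valid when
`𝔼_μ[1/ε] = ∞`, in which case both Bochner integrals take the junk value `0`.
-/

open MeasureTheory Real Set

theorem integral_integral_eq_toReal_lintegral_lintegral_swap {α β : Type*}
    [MeasurableSpace α] [MeasurableSpace β] {ν : Measure α} {μ : Measure β}
    [SFinite ν] [SFinite μ] {F : α → β → ℝ} (hF : Measurable (Function.uncurry F))
    (hF_nonneg : ∀ᵐ x ∂ν, 0 ≤ᵐ[μ] F x) (hF_int : ∀ᵐ x ∂ν, Integrable (F x) μ) :
    ∫ x, ∫ y, F x y ∂μ ∂ν = (∫⁻ y, ∫⁻ x, ENNReal.ofReal (F x y) ∂ν ∂μ).toReal := by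
  have h_inner : ∀ᵐ x ∂ν, ENNReal.ofReal (∫ y, F x y ∂μ) = ∫⁻ y, ENNReal.ofReal (F x y) ∂μ := by
    filter_upwards [hF_nonneg, hF_int] with x hx_nonneg hx_int
    exact ofReal_integral_eq_lintegral_ofReal hx_int hx_nonneg
  rw [integral_eq_lintegral_of_nonneg_ae (hF_nonneg.mono fun x hx => integral_nonneg_of_ae hx)
      hF.stronglyMeasurable.integral_prod_right'.aestronglyMeasurable,
    lintegral_congr_ae h_inner, lintegral_lintegral_swap hF.ennreal_ofReal.aemeasurable]

theorem integrable_comp_abs {f : ℝ → ℝ} (hf : IntegrableOn f (Ioi 0)) :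
    Integrable fun x => f |x| := by
  have h_Iic : IntegrableOn (fun x => f (-x)) (Iic 0) := by
    refine IntegrableOn.comp_neg_Iic (c := 0) ?_
    rwa [neg_zero, integrableOn_Ici_iff_integrableOn_Ioi]
  rw [← integrableOn_univ, ← Iic_union_Ioi (a := 0)]
  refine (h_Iic.congr_fun (fun x hx => ?_) measurableSet_Iic).union
    (hf.congr_fun (fun x hx => ?_) measurableSet_Ioi)
  · rw [abs_of_nonpos hx]
  · rw [abs_of_pos hx]

theorem integrableOn_mul_exp_neg_mul_Ioi {ε : ℝ} (hε : 0 < ε) :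
    IntegrableOn (fun x => x * exp (-(ε * x))) (Ioi 0) := by
  simpa using integrableOn_rpow_mul_exp_neg_mul_rpow (s := 1) (p := 1) (by norm_num) one_pos hε

theorem integral_mul_exp_neg_mul_Ioi {ε : ℝ} (hε : 0 < ε) :
    ∫ x in Ioi 0, x * exp (-(ε * x)) = (ε ^ 2)⁻¹ := by
  simpa [Gamma_two, show (2 : ℝ) - 1 = 1 by norm_num] using
    integral_rpow_mul_exp_neg_mul_Ioi two_pos hε

theorem lintegral_abs_mul_laplace_density {ε : ℝ} (hε : 0 < ε) :
    ∫⁻ x, ENNReal.ofReal (|x| * (ε / 2 * exp (-(ε * |x|)))) = ENNReal.ofReal ε⁻¹ := by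
  have h_int : IntegrableOn (fun x => x * (ε / 2 * exp (-(ε * x)))) (Ioi 0) := by
    refine IntegrableOn.congr_fun ((integrableOn_mul_exp_neg_mul_Ioi hε).const_mul (ε / 2))
      (fun x _ => ?_) measurableSet_Ioi
    ring
  rw [← ofReal_integral_eq_lintegral_ofReal (integrable_comp_abs h_int)
      (ae_of_all _ fun x => by positivity),
    integral_comp_abs (f := fun x => x * (ε / 2 * exp (-(ε * x))))]
  simp_rw [mul_left_comm _ (ε / 2)]
  rw [integral_const_mul, integral_mul_exp_neg_mul_Ioi hε]
  congr 1
  field_simp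

theorem lintegral_exp_neg_mul_Ioi {ε : ℝ} (hε : 0 < ε) :
    ∫⁻ x in Ioi 0, ENNReal.ofReal (exp (-x * ε)) = ENNReal.ofReal ε⁻¹ := by
  simp_rw [neg_mul, mul_comm _ ε, ← neg_mul]
  rw [← ofReal_integral_eq_lintegral_ofReal (exp_neg_integrableOn_Ioi 0 hε)
    (ae_of_all _ fun x => (exp_pos _).le), integral_exp_mul_Ioi (neg_neg_of_pos hε)]
  simp [neg_div]

theorem abs_mul_laplace_density_le (x ε : ℝ) :
    |x| * (ε / 2 * exp (-(ε * |x|))) ≤ exp (-1) / 2 := by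
  have := mul_exp_neg_le_exp_neg_one (ε * |x|)
  linarith [show |x| * (ε / 2 * exp (-(ε * |x|))) = ε * |x| * exp (-(ε * |x|)) / 2 by ring]

theorem mixture_laplace_l1_error_general
    (μ : Measure ℝ) [IsProbabilityMeasure μ] (hμ : μ (Set.Ioi 0) = 1)
    (g : ℝ → ℝ)
    (hg : ∀ x : ℝ, g x = ∫ ε, (ε / 2) * Real.exp (-(ε * |x|)) ∂μ)
    (M : ℝ → ℝ)
    (hM : ∀ t : ℝ, M t = ∫ ε, Real.exp (t * ε) ∂μ) :
    ∫ x : ℝ, |x| * g x = ∫ x in Set.Ioi (0 : ℝ), M (-x) := by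
  have hpos : ∀ᵐ ε ∂μ, 0 < ε :=
    (ae_mem_iff_measure_eq measurableSet_Ioi.nullMeasurableSet).2 (by rw [hμ, measure_univ])
  have h_lhs : ∫ x, |x| * g x =
      (∫⁻ ε, (∫⁻ x, ENNReal.ofReal (|x| * (ε / 2 * exp (-(ε * |x|))))) ∂μ).toReal := by
    have h_nonneg : ∀ x, ∀ᵐ ε ∂μ, 0 ≤ |x| * (ε / 2 * exp (-(ε * |x|))) := fun x =>
      hpos.mono fun ε hε => by positivity
    simp_rw [hg, ← integral_const_mul]
    refine integral_integral_eq_toReal_lintegral_lintegral_swap (by fun_prop)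
      (ae_of_all _ h_nonneg) (ae_of_all _ fun x => ?_)
    refine Integrable.of_bound (by fun_prop) (exp (-1) / 2) ((h_nonneg x).mono fun ε hε => ?_)
    rw [norm_of_nonneg hε]
    exact abs_mul_laplace_density_le x ε
  have h_rhs : ∫ x in Ioi 0, M (-x) =
      (∫⁻ ε, (∫⁻ x in Ioi 0, ENNReal.ofReal (exp (-x * ε))) ∂μ).toReal := by
    simp_rw [hM]
    refine integral_integral_eq_toReal_lintegral_lintegral_swap (by fun_prop)
      (ae_of_all _ fun x => ae_of_all _ fun ε => (exp_pos _).le)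
      ((ae_restrict_mem measurableSet_Ioi).mono fun x hx => ?_)
    refine Integrable.of_bound (by fun_prop) 1 (hpos.mono fun ε hε => ?_)
    rw [norm_of_nonneg (exp_pos _).le, exp_le_one_iff, neg_mul, neg_nonpos]
    exact (mul_pos hx hε).le
  rw [h_lhs, h_rhs]
  congr 1
  exact lintegral_congr_ae <| hpos.mono fun ε hε =>
    (lintegral_abs_mul_laplace_density hε).trans (lintegral_exp_neg_mul_Ioi hε).symm

/-- The expected `ℓ₁` error (expected absolute value of the added noise) of the mixture
Laplace mechanism equals `∫_0^∞ M(−x) dx`, where `M` is the moment generating function of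
the distribution `μ` of the reciprocal scale `1/b`. -/
theorem mixture_laplace_l1_error
    (μ : Measure ℝ) [IsProbabilityMeasure μ] (hμ : μ (Set.Ioi 0) = 1)
    (hint : Integrable (fun ε : ℝ => 1 / ε) μ)
    (g : ℝ → ℝ)
    (hg : ∀ x : ℝ, g x = ∫ ε, (ε / 2) * Real.exp (-(ε * |x|)) ∂μ)
    (M : ℝ → ℝ)
    (hM : ∀ t : ℝ, M t = ∫ ε, Real.exp (t * ε) ∂μ) :
    ∫ x : ℝ, |x| * g x = ∫ x in Set.Ioi (0 : ℝ), M (-x) :=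
  mixture_laplace_l1_error_general μ hμ g hg M hM
end

section
/- Let μ be a probability measure on ℝ with μ((0,∞)) = 1 and ∫ ε dμ(ε) < ∞, let M(t) = ∫ exp(t·ε) dμ(ε), and let Δq > 0 with M(Δq) < ∞. Set ε* = ln[ (∫ ε dμ(ε)) / (∫ ε·exp(−ε·Δq) dμ(ε)) ] (the differential privacy guarantee of the Randomized DP Laplace mechanism). If there exists γ > 0 such that the mixture usefulness exceeds the baseline usefulness at the same budget, i.e., 1 − M(−γ) > 1 − exp(−γ·ε*/Δq), then necessarily (∫ ε dμ(ε)) / (∫ ε·exp(−ε·Δq) dμ(ε)) < M(Δq). -/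
open MeasureTheory Real ProbabilityTheory

/-!
By Hölder's inequality the cumulant generating function `K = log M` is convex, and `K 0 = 0`;
interpolating between `-γ` and `Δq` gives `K (-γ) ≥ -(γ / Δq) K Δq`. If the ratio `R` defining
`ε* = log R` were at least `M Δq`, then `ε* ≥ K Δq`, hence
`exp (-(γ ε* / Δq)) ≤ exp (K (-γ)) = M (-γ)`, and the mixture could not beat the baseline at `γ`.
-/

section
variable {α : Type*} [MeasurableSpace α] {μ : Measure α}

theorem integral_rpow_mul_rpow_le_of_nonneg {f g : α → ℝ} (hf0 : 0 ≤ᵐ[μ] f) (hg0 : 0 ≤ᵐ[μ] g)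
    (hf : Integrable f μ) (hg : Integrable g μ) {p q : ℝ} (hp : 0 ≤ p) (hq : 0 ≤ q)
    (hpq : p + q = 1) :
    ∫ a, f a ^ p * g a ^ q ∂μ ≤ (∫ a, f a ∂μ) ^ p * (∫ a, g a ∂μ) ^ q := by
  have hfg0 : 0 ≤ᵐ[μ] fun a => f a ^ p * g a ^ q := by
    filter_upwards [hf0, hg0] with a hfa hga
    exact mul_nonneg (rpow_nonneg hfa p) (rpow_nonneg hga q)
  have hofReal : (fun a => ENNReal.ofReal (f a ^ p * g a ^ q)) =ᵐ[μ]
      fun a => ENNReal.ofReal (f a) ^ p * ENNReal.ofReal (g a) ^ q := by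
    filter_upwards [hf0, hg0] with a hfa hga
    rw [ENNReal.ofReal_rpow_of_nonneg hfa hp, ENNReal.ofReal_rpow_of_nonneg hga hq,
      ENNReal.ofReal_mul (rpow_nonneg hfa p)]
  rw [integral_eq_lintegral_of_nonneg_ae hfg0
      ((hf.1.aemeasurable.pow_const p).mul (hg.1.aemeasurable.pow_const q)).aestronglyMeasurable,
    integral_eq_lintegral_of_nonneg_ae hf0 hf.1, integral_eq_lintegral_of_nonneg_ae hg0 hg.1,
    ENNReal.toReal_rpow, ENNReal.toReal_rpow, ← ENNReal.toReal_mul, lintegral_congr_ae hofReal]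
  refine ENNReal.toReal_mono ?_ (ENNReal.lintegral_mul_norm_pow_le
    hf.aemeasurable.ennreal_ofReal hg.aemeasurable.ennreal_ofReal hp hq hpq)
  exact ENNReal.mul_ne_top (ENNReal.rpow_ne_top_of_nonneg hp hf.lintegral_lt_top.ne)
    (ENNReal.rpow_ne_top_of_nonneg hq hg.lintegral_lt_top.ne)

end

section
variable {Ω : Type*} [MeasurableSpace Ω] {μ : Measure Ω} {X : Ω → ℝ} {s t a b : ℝ}

theorem mgf_mul_add_mul_le (ha : 0 ≤ a) (hb : 0 ≤ b) (hab : a + b = 1)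
    (hs : Integrable (fun ω => exp (s * X ω)) μ) (ht : Integrable (fun ω => exp (t * X ω)) μ) :
    mgf X μ (a * s + b * t) ≤ mgf X μ s ^ a * mgf X μ t ^ b := by
  have hsplit : ∀ ω, exp ((a * s + b * t) * X ω) = exp (s * X ω) ^ a * exp (t * X ω) ^ b := by
    intro ω
    rw [← exp_mul, ← exp_mul, ← exp_add]
    ring_nf
  simp only [mgf, hsplit]
  exact integral_rpow_mul_rpow_le_of_nonneg (.of_forall fun ω => (exp_pos _).le)
    (.of_forall fun ω => (exp_pos _).le) hs ht ha hb hab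

theorem cgf_mul_add_mul_le [NeZero μ] (ha : 0 ≤ a) (hb : 0 ≤ b) (hab : a + b = 1)
    (hs : Integrable (fun ω => exp (s * X ω)) μ) (ht : Integrable (fun ω => exp (t * X ω)) μ) :
    cgf X μ (a * s + b * t) ≤ a * cgf X μ s + b * cgf X μ t := by
  have hμ : μ ≠ 0 := NeZero.ne μ
  have hsum : Integrable (fun ω => exp ((a * s + b * t) * X ω)) μ :=
    convex_integrableExpSet hs ht ha hb hab
  rw [cgf, cgf, cgf, ← log_rpow (mgf_pos' hμ hs), ← log_rpow (mgf_pos' hμ ht),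
    ← log_mul (rpow_pos_of_pos (mgf_pos' hμ hs) a).ne' (rpow_pos_of_pos (mgf_pos' hμ ht) b).ne']
  exact log_le_log (mgf_pos' hμ hsum) (mgf_mul_add_mul_le ha hb hab hs ht)

theorem neg_div_mul_cgf_le_cgf_neg [IsProbabilityMeasure μ] (hs : 0 < s) (ht : 0 < t)
    (hs_int : Integrable (fun ω => exp (-s * X ω)) μ)
    (ht_int : Integrable (fun ω => exp (t * X ω)) μ) :
    -(s / t) * cgf X μ t ≤ cgf X μ (-s) := by
  have hst : 0 < s + t := add_pos hs ht
  have h := cgf_mul_add_mul_le (div_pos ht hst).le (div_pos hs hst).le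
    (by field_simp; ring) hs_int ht_int
  rw [show t / (s + t) * -s + s / (s + t) * t = 0 by ring, cgf_zero] at h
  have hrescale : (s + t) / t * (t / (s + t) * cgf X μ (-s) + s / (s + t) * cgf X μ t) =
      cgf X μ (-s) + s / t * cgf X μ t := by
    field_simp
  have := hrescale ▸ mul_nonneg (div_pos hst ht).le h
  linarith

theorem integrable_exp_mul_of_nonpos_of_nonneg [IsFiniteMeasure μ] (hX : AEMeasurable X μ)
    (hX0 : 0 ≤ᵐ[μ] X) (ht : t ≤ 0) : Integrable (fun ω => exp (t * X ω)) μ := by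
  refine .of_bound (by fun_prop) 1 ?_
  filter_upwards [hX0] with ω hω
  rw [norm_of_nonneg (exp_pos _).le, exp_le_one_iff]
  exact mul_nonpos_of_nonpos_of_nonneg ht hω

end

theorem mixture_laplace_necessary_condition_general
    (μ : Measure ℝ) [IsProbabilityMeasure μ] (hμ : μ (Set.Ioi 0) = 1)
    (M : ℝ → ℝ)
    (hM : ∀ t : ℝ, M t = ∫ ε, Real.exp (t * ε) ∂μ)
    (Δq : ℝ) (hΔq : 0 < Δq)
    (hMfin : Integrable (fun ε : ℝ => Real.exp (Δq * ε)) μ)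
    (εstar : ℝ)
    (hεstar : εstar = Real.log ((∫ ε, ε ∂μ) / (∫ ε, ε * Real.exp (-(ε * Δq)) ∂μ)))
    (hboost : ∃ γ : ℝ, 0 < γ ∧ 1 - Real.exp (-(γ * εstar / Δq)) < 1 - M (-γ)) :
    (∫ ε, ε ∂μ) / (∫ ε, ε * Real.exp (-(ε * Δq)) ∂μ) < M Δq := by
  obtain ⟨γ, hγ, hboost⟩ := hboost
  obtain rfl : M = mgf id μ := funext hM
  have hnonneg : 0 ≤ᵐ[μ] id := by
    filter_upwards [(ae_iff_measure_eq (measurableSet_Ioi (a := (0 : ℝ))).nullMeasurableSet).2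
      (hμ.trans measure_univ.symm)] with ε (hε : 0 < ε) using hε.le
  have hγint : Integrable (fun ε => exp (-γ * id ε)) μ :=
    integrable_exp_mul_of_nonpos_of_nonneg aemeasurable_id hnonneg (neg_nonpos.2 hγ.le)
  by_contra! hR
  have hcgf_le : cgf id μ Δq ≤ εstar := hεstar ▸ log_le_log (mgf_pos hMfin) hR
  have hexp_le : exp (-(γ * εstar / Δq)) ≤ mgf id μ (-γ) := by
    rw [← exp_cgf hγint, exp_le_exp]
    calc -(γ * εstar / Δq) = -(γ / Δq) * εstar := by ring
      _ ≤ -(γ / Δq) * cgf id μ Δq :=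
        mul_le_mul_of_nonpos_left hcgf_le (neg_nonpos.2 (div_pos hγ hΔq).le)
      _ ≤ cgf id μ (-γ) := neg_div_mul_cgf_le_cgf_neg hγ hΔq hγint hMfin
  linarith

/-- Necessary condition for a Randomized DP Laplace mechanism to boost utility over the
baseline Laplace mechanism at the same privacy budget
`ε* = ln[ E(1/b) / M′_{1/b}(−Δq) ]`: if the mixture usefulness `1 − M(−γ)` exceeds the
baseline usefulness `1 − exp(−γ·ε*/Δq)` for some `γ > 0`, then necessarily
`E(1/b)/M′_{1/b}(−Δq) < M(Δq)`. -/
theorem mixture_laplace_necessary_condition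
    (μ : Measure ℝ) [IsProbabilityMeasure μ] (hμ : μ (Set.Ioi 0) = 1)
    (hint : Integrable (fun ε : ℝ => ε) μ)
    (M : ℝ → ℝ)
    (hM : ∀ t : ℝ, M t = ∫ ε, Real.exp (t * ε) ∂μ)
    (Δq : ℝ) (hΔq : 0 < Δq)
    (hMfin : Integrable (fun ε : ℝ => Real.exp (Δq * ε)) μ)
    (εstar : ℝ)
    (hεstar : εstar = Real.log ((∫ ε, ε ∂μ) / (∫ ε, ε * Real.exp (-(ε * Δq)) ∂μ)))
    (hboost : ∃ γ : ℝ, 0 < γ ∧ 1 - Real.exp (-(γ * εstar / Δq)) < 1 - M (-γ)) :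
    (∫ ε, ε ∂μ) / (∫ ε, ε * Real.exp (-(ε * Δq)) ∂μ) < M Δq :=
  mixture_laplace_necessary_condition_general μ hμ M hM Δq hΔq hMfin εstar hεstar hboost
end

section
/- Let X₁, …, Xₙ be independent random variables on a probability space, each almost surely positive, let a₁, …, aₙ > 0, let Y = ∑_{i=1}^n aᵢ·Xᵢ, and let μ be the law of Y. Assume E[Xⱼ] < ∞ and E[exp(t·Xⱼ)] < ∞ for all needed t for each j, and let M_{Xᵢ}(t) = E[exp(t·Xᵢ)]. Let g(x) = ∫ (ε/2)·exp(−ε·|x|) dμ(ε) and Δq > 0. Then the mixture Laplace mechanism driven by μ is ε₀-differentially private with ε₀ = ln[ (∑_{j=1}^n aⱼ·E[Xⱼ]) / ( ∑_{j=1}^n aⱼ·E[Xⱼ·exp(−aⱼ·Δq·Xⱼ)] · ∏_{i≠j} M_{Xᵢ}(−aᵢ·Δq) ) ]. -/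
open MeasureTheory Real ProbabilityTheory

/-!
The density of the mixture is `g x = L |x| / 2` with `L u = ∫ ε e^{-uε} dμ(ε)`. Chebyshev's
correlation inequality for the two antitone functions `ε ↦ e^{-sε}`, `ε ↦ e^{-tε}` against the
measure `ε dμ` gives `L s · L t ≤ L 0 · L (s + t)`; since `L` is antitone and
`|x - c'| ≤ |x - c| + Δq`, this yields the pointwise ratio bound
`g (x - c) ≤ (L 0 / L Δq) · g (x - c')`.
For `μ` the law of `Y = ∑ aᵢ Xᵢ`, `L 0 = ∑ aⱼ E[Xⱼ]`, and independence factors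
`E[Xⱼ e^{-Δq Y}]` as `E[Xⱼ e^{-aⱼΔq Xⱼ}] ∏_{i≠j} M_{Xᵢ}(-aᵢΔq)`, which identifies `L Δq`.
-/

lemma MeasureTheory.Integrable.mul_exp_neg {α : Type*} [MeasurableSpace α] {μ : Measure α}
    {f h : α → ℝ}
    (hf : Integrable f μ) (hh : AEStronglyMeasurable h μ) (h0 : ∀ᵐ x ∂μ, 0 ≤ h x) :
    Integrable (fun x => f x * exp (-h x)) μ := by
  refine hf.mul_bdd (c := 1) (continuous_exp.comp_aestronglyMeasurable hh.neg) ?_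
  filter_upwards [h0] with x hx
  rw [norm_of_nonneg (exp_pos _).le]
  exact exp_le_one_iff.2 (neg_nonpos.2 hx)

lemma integral_le_mul_integral_of_le_mul {α : Type*} [MeasurableSpace α] {μ : Measure α}
    {f h : α → ℝ} {C : ℝ} (hf : 0 ≤ f) (hh : 0 ≤ h) (hhm : AEStronglyMeasurable h μ)
    (hfh : ∀ x, f x ≤ C * h x) (hhf : ∀ x, h x ≤ C * f x) :
    ∫ x, f x ∂μ ≤ C * ∫ x, h x ∂μ := by
  by_cases hhi : Integrable h μ
  · rw [← integral_const_mul]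
    exact integral_mono_of_nonneg (.of_forall hf) (hhi.const_mul C) (.of_forall hfh)
  · have hfi : ¬ Integrable f μ := fun hfi =>
      hhi <| (hfi.const_mul C).mono' hhm <| .of_forall fun x => by
        rw [norm_of_nonneg (hh x)]; exact hhf x
    rw [integral_undef hfi, integral_undef hhi, mul_zero]

noncomputable def tiltedMean (ν : Measure ℝ) (u : ℝ) : ℝ := ∫ ε, ε * exp (-(u * ε)) ∂ν

noncomputable def mixtureLaplaceDensity (ν : Measure ℝ) (x : ℝ) : ℝ :=
  ∫ ε, ε / 2 * exp (-(ε * |x|)) ∂ν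

section TiltedMean

variable {ν : Measure ℝ}

lemma integrable_mul_exp_neg_mul (hν : ∀ᵐ ε ∂ν, 0 ≤ ε) (hint : Integrable id ν) {u : ℝ}
    (hu : 0 ≤ u) : Integrable (fun ε => ε * exp (-(u * ε))) ν :=
  hint.mul_exp_neg (continuous_const.mul continuous_id).aestronglyMeasurable
    (hν.mono fun _ hε => mul_nonneg hu hε)

lemma tiltedMean_nonneg (hν : ∀ᵐ ε ∂ν, 0 ≤ ε) (u : ℝ) : 0 ≤ tiltedMean ν u :=
  integral_nonneg_of_ae <| hν.mono fun _ hε => mul_nonneg hε (exp_pos _).le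

lemma tiltedMean_antitoneOn (hν : ∀ᵐ ε ∂ν, 0 ≤ ε) (hint : Integrable id ν) :
    AntitoneOn (tiltedMean ν) (Set.Ici 0) := by
  intro v hv u hu hvu
  refine integral_mono_ae (integrable_mul_exp_neg_mul hν hint hu)
    (integrable_mul_exp_neg_mul hν hint hv) ?_
  filter_upwards [hν] with ε hε
  exact mul_le_mul_of_nonneg_left (exp_le_exp.2 (by nlinarith)) hε

lemma tiltedMean_mul_le [SFinite ν] (hν : ∀ᵐ ε ∂ν, 0 ≤ ε) (hint : Integrable id ν) {s t : ℝ}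
    (hs : 0 ≤ s) (ht : 0 ≤ t) :
    tiltedMean ν s * tiltedMean ν t ≤ tiltedMean ν 0 * tiltedMean ν (s + t) := by
  set f : ℝ → ℝ → ℝ := fun u ε => ε * exp (-(u * ε))
  have hf : ∀ u, 0 ≤ u → Integrable (f u) ν := fun u hu => integrable_mul_exp_neg_mul hν hint hu
  have hfprod : ∀ u v, 0 ≤ u → 0 ≤ v →
      Integrable (fun z : ℝ × ℝ => f u z.1 * f v z.2) (ν.prod ν) :=
    fun u v hu hv => (hf u hu).mul_prod (hf v hv)
  have hanti : ∀ u, 0 ≤ u → Antitone fun y : ℝ => exp (-(u * y)) := fun u hu y y' h =>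
    exp_le_exp.2 (by nlinarith)
  -- the rearrangement inequality for the comonotone `e^{-s·}`, `e^{-t·}`, weighted by `y y' ≥ 0`
  have hpt : ∀ᵐ z ∂ν.prod ν, f s z.1 * f t z.2 + f t z.1 * f s z.2 ≤
      f (s + t) z.1 * f 0 z.2 + f 0 z.1 * f (s + t) z.2 := by
    filter_upwards [Measure.quasiMeasurePreserving_fst.ae hν,
      Measure.quasiMeasurePreserving_snd.ae hν] with ⟨y, y'⟩ hy hy'
    have := mul_le_mul_of_nonneg_left
      (((hanti s hs).monovary (hanti t ht)).mul_add_mul_le_mul_add_mul y y') (mul_nonneg hy hy')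
    simp only [f, add_mul, neg_add, exp_add, zero_mul, neg_zero, exp_zero]
    linear_combination this
  have hst := add_nonneg hs ht
  have : ∫ z, f s z.1 * f t z.2 + f t z.1 * f s z.2 ∂ν.prod ν ≤
      ∫ z, f (s + t) z.1 * f 0 z.2 + f 0 z.1 * f (s + t) z.2 ∂ν.prod ν :=
    integral_mono_ae ((hfprod s t hs ht).add (hfprod t s ht hs))
      ((hfprod _ _ hst le_rfl).add (hfprod _ _ le_rfl hst)) hpt
  rw [integral_add (hfprod _ _ hs ht) (hfprod _ _ ht hs),
    integral_add (hfprod _ _ hst le_rfl) (hfprod _ _ le_rfl hst), integral_prod_mul,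
    integral_prod_mul, integral_prod_mul, integral_prod_mul] at this
  simp only [tiltedMean]
  linarith

lemma tiltedMean_eq_zero_of_eq_zero (hν : ∀ᵐ ε ∂ν, 0 ≤ ε) (hint : Integrable id ν) {t : ℝ}
    (ht : 0 ≤ t) (h : tiltedMean ν t = 0) (u : ℝ) : tiltedMean ν u = 0 := by
  have hzero : ∀ᵐ ε ∂ν, ε = 0 := by
    have := (integral_eq_zero_iff_of_nonneg_ae (hν.mono fun _ hε => mul_nonneg hε (exp_pos _).le)
      (integrable_mul_exp_neg_mul hν hint ht)).1 h
    filter_upwards [this] with ε hε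
    exact (mul_eq_zero.1 hε).resolve_right (exp_ne_zero _)
  exact integral_eq_zero_of_ae <| hzero.mono fun ε hε => by simp [hε]

lemma tiltedMean_le_div_mul [SFinite ν] (hν : ∀ᵐ ε ∂ν, 0 ≤ ε) (hint : Integrable id ν)
    {s t : ℝ} (hs : 0 ≤ s) (ht : 0 ≤ t) :
    tiltedMean ν s ≤ tiltedMean ν 0 / tiltedMean ν t * tiltedMean ν (s + t) := by
  rcases (tiltedMean_nonneg hν t).eq_or_lt with h | h
  · simp [tiltedMean_eq_zero_of_eq_zero hν hint ht h.symm s, ← h]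
  · rw [div_mul_eq_mul_div, le_div_iff₀ h]
    exact tiltedMean_mul_le hν hint hs ht

lemma tiltedMean_map {Ω : Type*} [MeasurableSpace Ω] {P : Measure Ω} {Y : Ω → ℝ}
    (hY : AEMeasurable Y P) (u : ℝ) :
    tiltedMean (P.map Y) u = ∫ ω, Y ω * exp (-(u * Y ω)) ∂P :=
  integral_map hY (by fun_prop)

end TiltedMean

section MixtureLaplaceDensity

variable {ν : Measure ℝ}

lemma mixtureLaplaceDensity_eq (x : ℝ) : mixtureLaplaceDensity ν x = tiltedMean ν |x| / 2 := by
  rw [mixtureLaplaceDensity, tiltedMean, ← integral_div]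
  congr 1
  funext ε
  rw [mul_comm |x| ε]
  ring

lemma mixtureLaplaceDensity_nonneg (hν : ∀ᵐ ε ∂ν, 0 ≤ ε) (x : ℝ) :
    0 ≤ mixtureLaplaceDensity ν x := by
  rw [mixtureLaplaceDensity_eq]
  exact div_nonneg (tiltedMean_nonneg hν _) zero_le_two

lemma measurable_mixtureLaplaceDensity [SFinite ν] : Measurable (mixtureLaplaceDensity ν) :=
  (StronglyMeasurable.integral_prod_right' (f := fun z : ℝ × ℝ => z.2 / 2 * exp (-(z.2 * |z.1|)))
    (by fun_prop : Continuous _).stronglyMeasurable).measurable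

lemma mixtureLaplaceDensity_sub_le [SFinite ν] (hν : ∀ᵐ ε ∂ν, 0 ≤ ε) (hint : Integrable id ν)
    {Δ c c' : ℝ} (hcc : |c - c'| ≤ Δ) (x : ℝ) :
    mixtureLaplaceDensity ν (x - c) ≤
      tiltedMean ν 0 / tiltedMean ν Δ * mixtureLaplaceDensity ν (x - c') := by
  have hΔ : 0 ≤ Δ := (abs_nonneg _).trans hcc
  have htri : |x - c'| ≤ |x - c| + Δ := by
    calc |x - c'| = |(x - c) + (c - c')| := by ring_nf
      _ ≤ |x - c| + |c - c'| := abs_add_le _ _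
      _ ≤ |x - c| + Δ := by gcongr
  have hC : 0 ≤ tiltedMean ν 0 / tiltedMean ν Δ :=
    div_nonneg (tiltedMean_nonneg hν 0) (tiltedMean_nonneg hν Δ)
  have := (tiltedMean_le_div_mul hν hint (abs_nonneg (x - c)) hΔ).trans <|
    mul_le_mul_of_nonneg_left (tiltedMean_antitoneOn hν hint (abs_nonneg (x - c'))
      (add_nonneg (abs_nonneg _) hΔ) htri) hC
  rw [mixtureLaplaceDensity_eq, mixtureLaplaceDensity_eq]
  linarith

theorem setIntegral_mixtureLaplaceDensity_sub_le [SFinite ν] (hν : ∀ᵐ ε ∂ν, 0 ≤ ε)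
    (hint : Integrable id ν) (S : Set ℝ) {Δ c c' : ℝ} (hcc : |c - c'| ≤ Δ) :
    ∫ x in S, mixtureLaplaceDensity ν (x - c) ≤
      tiltedMean ν 0 / tiltedMean ν Δ * ∫ x in S, mixtureLaplaceDensity ν (x - c') :=
  integral_le_mul_integral_of_le_mul (fun _ => mixtureLaplaceDensity_nonneg hν _)
    (fun _ => mixtureLaplaceDensity_nonneg hν _)
    (measurable_mixtureLaplaceDensity.comp (measurable_sub_const c')).aestronglyMeasurable
    (mixtureLaplaceDensity_sub_le hν hint hcc)
    (mixtureLaplaceDensity_sub_le hν hint (abs_sub_comm c c' ▸ hcc))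

end MixtureLaplaceDensity

section LinearCombination

variable {Ω ι : Type*} [MeasurableSpace Ω] {P : Measure Ω} [Fintype ι] [DecidableEq ι]
  {X : ι → Ω → ℝ}

lemma ProbabilityTheory.iIndepFun.integral_mul_exp_sum (hX : iIndepFun X P)
    (mX : ∀ i, AEMeasurable (X i) P) (b : ι → ℝ) (j : ι) :
    ∫ ω, X j ω * exp (∑ i, b i * X i ω) ∂P =
      (∫ ω, X j ω * exp (b j * X j ω) ∂P) *
        ∏ i ∈ Finset.univ.erase j, ∫ ω, exp (b i * X i ω) ∂P := by
  set φ : ι → ℝ → ℝ := Function.update (fun i x => exp (b i * x)) j (fun x => x * exp (b j * x))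
  have hφ : ∀ i, Continuous (φ i) := fun i => by
    rcases eq_or_ne i j with rfl | h
    · simp only [φ, Function.update_self]; fun_prop
    · simp only [φ, Function.update_of_ne h]; fun_prop
  have hφ_ne : ∀ i ∈ Finset.univ.erase j, ∀ x, φ i x = exp (b i * x) := fun i hi x =>
    by simp [φ, Finset.ne_of_mem_erase hi]
  have hpt : ∀ ω, X j ω * exp (∑ i, b i * X i ω) = ∏ i, φ i (X i ω) := fun ω => by
    rw [exp_sum, ← Finset.mul_prod_erase _ _ (Finset.mem_univ j),
      ← Finset.mul_prod_erase _ (fun i => φ i (X i ω)) (Finset.mem_univ j),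
      Finset.prod_congr rfl fun i hi => hφ_ne i hi (X i ω)]
    simp only [φ, Function.update_self]
    ring
  rw [integral_congr_ae (.of_forall hpt),
    hX.integral_fun_prod_comp mX fun i => (hφ i).aestronglyMeasurable,
    ← Finset.mul_prod_erase _ _ (Finset.mem_univ j),
    Finset.prod_congr rfl fun i hi => integral_congr_ae (.of_forall fun ω => hφ_ne i hi (X i ω))]
  simp only [φ, Function.update_self]

lemma tiltedMean_map_sum_mul (hX : iIndepFun X P) (mX : ∀ i, Measurable (X i))
    (hXint : ∀ i, Integrable (X i) P) {a : ι → ℝ} (hY0 : ∀ᵐ ω ∂P, 0 ≤ ∑ i, a i * X i ω)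
    {t : ℝ} (ht : 0 ≤ t) :
    tiltedMean (P.map fun ω => ∑ i, a i * X i ω) t =
      ∑ j, a j * (∫ ω, X j ω * exp (-(a j * t) * X j ω) ∂P) *
        ∏ i ∈ Finset.univ.erase j, ∫ ω, exp (-(a i * t) * X i ω) ∂P := by
  set Y : Ω → ℝ := fun ω => ∑ i, a i * X i ω
  have hYm : Measurable Y := Finset.measurable_sum _ fun i _ => (mX i).const_mul _
  have htY : ∀ᵐ ω ∂P, 0 ≤ t * Y ω := hY0.mono fun _ h => mul_nonneg ht h
  have hexp : ∀ ω, -(t * Y ω) = ∑ i, -(a i * t) * X i ω := fun ω => by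
    simp only [Y, Finset.mul_sum, ← Finset.sum_neg_distrib]
    exact Finset.sum_congr rfl fun i _ => by ring
  have hpt : ∀ ω, Y ω * exp (-(t * Y ω)) = ∑ j, a j * (X j ω * exp (-(t * Y ω))) := fun ω => by
    simp only [Y, Finset.sum_mul, mul_assoc]
  have hint : ∀ j, Integrable (fun ω => X j ω * exp (-(t * Y ω))) P := fun j =>
    (hXint j).mul_exp_neg (hYm.const_mul t).aestronglyMeasurable htY
  rw [tiltedMean_map hYm.aemeasurable, integral_congr_ae (.of_forall hpt),
    integral_finsetSum _ fun j _ => (hint j).const_mul _]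
  refine Finset.sum_congr rfl fun j _ => ?_
  simp only [integral_const_mul, mul_assoc, hexp]
  rw [hX.integral_mul_exp_sum (fun i => (mX i).aemeasurable)]

end LinearCombination

theorem mixture_laplace_linear_combination_dp_general
    {Ω : Type*} [MeasureSpace Ω]
    (n : ℕ) (X : Fin n → Ω → ℝ)
    (hXmeas : ∀ i, Measurable (X i))
    (hXindep : iIndepFun X ℙ)
    (hXpos : ∀ i, ∀ᵐ ω ∂(ℙ : Measure Ω), 0 < X i ω)
    (a : Fin n → ℝ) (ha : ∀ i, 0 < a i)
    (hXint : ∀ j, Integrable (X j) ℙ)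
    (M : Fin n → ℝ → ℝ)
    (hM : ∀ i, ∀ t : ℝ, M i t = ∫ ω, Real.exp (t * X i ω))
    (Y : Ω → ℝ) (hY : ∀ ω, Y ω = ∑ i, a i * X i ω)
    (μ : Measure ℝ) (hμ : μ = Measure.map Y ℙ)
    (g : ℝ → ℝ)
    (hg : ∀ x : ℝ, g x = ∫ ε, (ε / 2) * Real.exp (-(ε * |x|)) ∂μ)
    (Δq : ℝ)
    (ε₀ : ℝ)
    (hε₀ : ε₀ = Real.log ((∑ j, a j * ∫ ω, X j ω) /
      (∑ j, a j * (∫ ω, X j ω * Real.exp (-(a j * Δq) * X j ω)) *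
        ∏ i ∈ Finset.univ.erase j, M i (-(a i * Δq))))) :
    ∀ S : Set ℝ, MeasurableSet S → ∀ c c' : ℝ, |c - c'| ≤ Δq →
      ∫ x in S, g (x - c) ≤ Real.exp ε₀ * ∫ x in S, g (x - c') := by
  intro S _ c c' hcc
  have := hXindep.isProbabilityMeasure
  obtain rfl : Y = fun ω => ∑ i, a i * X i ω := funext hY
  obtain rfl : g = mixtureLaplaceDensity μ := funext hg
  have hYm : Measurable fun ω => ∑ i, a i * X i ω :=
    Finset.measurable_sum _ fun i _ => (hXmeas i).const_mul _
  have hY0 : ∀ᵐ ω ∂(ℙ : Measure Ω), 0 ≤ ∑ i, a i * X i ω := by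
    filter_upwards [ae_all_iff.2 hXpos] with ω hω
    exact Finset.sum_nonneg fun i _ => (mul_pos (ha i) (hω i)).le
  have : IsProbabilityMeasure μ := hμ ▸ Measure.isProbabilityMeasure_map hYm.aemeasurable
  have hν : ∀ᵐ ε ∂μ, 0 ≤ ε := hμ ▸ (ae_map_iff hYm.aemeasurable measurableSet_Ici).2 hY0
  have hint : Integrable id μ := hμ ▸
    (integrable_map_measure aestronglyMeasurable_id hYm.aemeasurable).2
      (integrable_finsetSum Finset.univ fun i _ => (hXint i).const_mul (a i))
  have hratio : tiltedMean μ 0 / tiltedMean μ Δq ≤ exp ε₀ := by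
    rw [hε₀, hμ, tiltedMean_map_sum_mul hXindep hXmeas hXint hY0 le_rfl,
      tiltedMean_map_sum_mul hXindep hXmeas hXint hY0 ((abs_nonneg _).trans hcc)]
    -- `le_exp_log` also covers the junk value `log 0 = 0`, reached when `n = 0`
    simpa [hM] using le_exp_log _
  calc ∫ x in S, mixtureLaplaceDensity μ (x - c)
      ≤ tiltedMean μ 0 / tiltedMean μ Δq * ∫ x in S, mixtureLaplaceDensity μ (x - c') :=
        setIntegral_mixtureLaplaceDensity_sub_le hν hint S hcc
    _ ≤ exp ε₀ * ∫ x in S, mixtureLaplaceDensity μ (x - c') :=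
        mul_le_mul_of_nonneg_right hratio
          (integral_nonneg fun _ => mixtureLaplaceDensity_nonneg hν _)

/-- Differential privacy of a Randomized DP Laplace mechanism whose reciprocal scale
`1/b` is a linear combination `Y = ∑ aᵢ·Xᵢ` of independent positive random variables:
it is `ln[ (∑ aⱼ E[Xⱼ]) / (∑ aⱼ E[Xⱼ exp(−aⱼΔq Xⱼ)] ∏_{i≠j} M_{Xᵢ}(−aᵢΔq)) ]`-DP. -/
theorem mixture_laplace_linear_combination_dp
    {Ω : Type*} [MeasureSpace Ω] [IsProbabilityMeasure (ℙ : Measure Ω)]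
    (n : ℕ) (X : Fin n → Ω → ℝ)
    (hXmeas : ∀ i, Measurable (X i))
    (hXindep : iIndepFun X ℙ)
    (hXpos : ∀ i, ∀ᵐ ω ∂(ℙ : Measure Ω), 0 < X i ω)
    (a : Fin n → ℝ) (ha : ∀ i, 0 < a i)
    (hXint : ∀ j, Integrable (X j) ℙ)
    (hXexp : ∀ j, ∀ t : ℝ, t ≤ 0 → Integrable (fun ω => Real.exp (t * X j ω)) ℙ)
    (M : Fin n → ℝ → ℝ)
    (hM : ∀ i, ∀ t : ℝ, M i t = ∫ ω, Real.exp (t * X i ω))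
    (Y : Ω → ℝ) (hY : ∀ ω, Y ω = ∑ i, a i * X i ω)
    (μ : Measure ℝ) (hμ : μ = Measure.map Y ℙ)
    (g : ℝ → ℝ)
    (hg : ∀ x : ℝ, g x = ∫ ε, (ε / 2) * Real.exp (-(ε * |x|)) ∂μ)
    (Δq : ℝ) (hΔq : 0 < Δq)
    (ε₀ : ℝ)
    (hε₀ : ε₀ = Real.log ((∑ j, a j * ∫ ω, X j ω) /
      (∑ j, a j * (∫ ω, X j ω * Real.exp (-(a j * Δq) * X j ω)) *
        ∏ i ∈ Finset.univ.erase j, M i (-(a i * Δq))))) :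
    ∀ S : Set ℝ, MeasurableSet S → ∀ c c' : ℝ, |c - c'| ≤ Δq →
      ∫ x in S, g (x - c) ≤ Real.exp ε₀ * ∫ x in S, g (x - c') :=
  mixture_laplace_linear_combination_dp_general n X hXmeas hXindep hXpos a ha hXint M hM Y hY μ hμ g
    hg Δq ε₀ hε₀
end

section
/- Let k > 0, θ > 0, Δq > 0, and let f_Γ(ε) = ε^{k−1}·exp(−ε/θ) / (Γ(k)·θ^k) for ε > 0 be the Gamma density with shape k and scale θ. Let g(x) = ∫_0^∞ f_Γ(ε)·(ε/2)·exp(−ε·|x|) dε be the corresponding mixture Laplace density. Then the mechanism is ε₀-differentially private with ε₀ = (k+1)·ln(1 + Δq·θ): for every measurable set S ⊆ ℝ and all a, a′ ∈ ℝ with |a − a′| ≤ Δq, ∫_S g(x − a) dx ≤ (1 + Δq·θ)^{k+1} · ∫_S g(x − a′) dx. -/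
open MeasureTheory Real

/-!
Integrating the Laplace kernel against the Gamma density is a Gamma integral with rate
`1/θ + |x|`, so the mixture density has the closed form `g x = k θ / 2 * (1 + θ |x|) ^ (-(k+1))`.
Moving the centre by at most `Δq` changes `1 + θ |x - a|` by at most the factor `1 + Δq θ`,
so `g (x - a) ≤ (1 + Δq θ) ^ (k+1) * g (x - a')` pointwise, and the bound on `∫_S` follows
by integrating, `g` being integrable because `k + 1 > 1`.
-/

theorem integral_gamma_density_mul_laplace_kernel {k θ t : ℝ} (hk : 0 < k) (hθ : 0 < θ)
    (ht : 0 < 1 + θ * t) :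
    ∫ ε in Set.Ioi (0 : ℝ),
        ε ^ (k - 1) * exp (-(ε / θ)) / (Gamma k * θ ^ k) * ((ε / 2) * exp (-(ε * t))) =
      k * θ / 2 * (1 + θ * t) ^ (-(k + 1)) := by
  have hrate : 0 < 1 / θ + t := by
    rw [show 1 / θ + t = (1 + θ * t) / θ by field_simp]; positivity
  have hintegrand : ∀ ε ∈ Set.Ioi (0 : ℝ),
      ε ^ (k - 1) * exp (-(ε / θ)) / (Gamma k * θ ^ k) * ((ε / 2) * exp (-(ε * t))) =
        (2 * Gamma k * θ ^ k)⁻¹ * (ε ^ ((k + 1) - 1) * exp (-((1 / θ + t) * ε))) := by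
    intro ε (hε : 0 < ε)
    rw [add_sub_cancel_right, rpow_sub_one hε.ne',
      show -((1 / θ + t) * ε) = -(ε / θ) + -(ε * t) by ring, exp_add]
    field_simp
  rw [setIntegral_congr_fun measurableSet_Ioi hintegrand, integral_const_mul,
    integral_rpow_mul_exp_neg_mul_Ioi (by linarith) hrate, Gamma_add_one hk.ne',
    show 1 / (1 / θ + t) = θ / (1 + θ * t) by field_simp, div_rpow hθ.le ht.le,
    rpow_add hθ, rpow_one, rpow_neg ht.le]
  have := (Gamma_pos_of_pos hk).ne'
  have := (rpow_pos_of_pos hθ k).ne'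
  field_simp

theorem integrable_one_add_mul_abs_sub_rpow_neg {θ p : ℝ} (hθ : 0 < θ) (hp : 1 < p) (b : ℝ) :
    Integrable fun x : ℝ => (1 + θ * |x - b|) ^ (-p) := by
  have hpareto : Integrable fun y : ℝ => (1 + ‖y‖) ^ (-p) :=
    integrable_one_add_norm (by simpa using hp)
  simpa [norm_mul, abs_of_pos hθ] using (hpareto.comp_mul_left' hθ.ne').comp_sub_right b

theorem one_add_mul_abs_sub_le {θ d a a' : ℝ} (hθ : 0 ≤ θ) (haa' : |a - a'| ≤ d) (x : ℝ) :
    1 + θ * |x - a'| ≤ (1 + d * θ) * (1 + θ * |x - a|) := by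
  have htri : |x - a'| ≤ |x - a| + d := (abs_sub_le x a a').trans (by linarith)
  have hd : 0 ≤ d := (abs_nonneg _).trans haa'
  nlinarith [mul_le_mul_of_nonneg_left htri hθ,
    mul_nonneg (mul_nonneg hd hθ) (mul_nonneg hθ (abs_nonneg (x - a)))]

theorem one_add_mul_abs_sub_rpow_neg_le {θ d p a a' : ℝ} (hθ : 0 ≤ θ) (hp : 0 ≤ p)
    (haa' : |a - a'| ≤ d) (x : ℝ) :
    (1 + θ * |x - a|) ^ (-p) ≤ (1 + d * θ) ^ p * (1 + θ * |x - a'|) ^ (-p) := by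
  have hd : 0 ≤ d := (abs_nonneg _).trans haa'
  have hu : 0 < 1 + θ * |x - a| := by positivity
  have hv : 0 < 1 + θ * |x - a'| := by positivity
  rw [rpow_neg hu.le, rpow_neg hv.le, ← div_eq_mul_inv, ← one_div,
    div_le_div_iff₀ (by positivity) (by positivity), one_mul, ← mul_rpow (by positivity) hu.le]
  exact rpow_le_rpow hv.le (one_add_mul_abs_sub_le hθ haa' x) hp

theorem gamma_mixture_laplace_dp_general
    (k θ Δq : ℝ) (hk : 0 < k) (hθ : 0 < θ)
    (fΓ : ℝ → ℝ)
    (hfΓ : ∀ ε : ℝ, 0 < ε →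
      fΓ ε = ε ^ (k - 1) * Real.exp (-(ε / θ)) / (Real.Gamma k * θ ^ k))
    (g : ℝ → ℝ)
    (hg : ∀ x : ℝ, g x = ∫ ε in Set.Ioi (0 : ℝ), fΓ ε * ((ε / 2) * Real.exp (-(ε * |x|)))) :
    ∀ S : Set ℝ, MeasurableSet S → ∀ a a' : ℝ, |a - a'| ≤ Δq →
      ∫ x in S, g (x - a) ≤ (1 + Δq * θ) ^ (k + 1) * ∫ x in S, g (x - a') := by
  obtain rfl : g = fun x => k * θ / 2 * (1 + θ * |x|) ^ (-(k + 1)) := by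
    funext x
    rw [hg, ← integral_gamma_density_mul_laplace_kernel hk hθ (by positivity)]
    exact setIntegral_congr_fun measurableSet_Ioi fun ε hε => by rw [hfΓ ε hε]
  intro S _ a a' haa'
  rw [← integral_const_mul]
  refine integral_mono_of_nonneg (.of_forall fun x => by positivity) ?_
    (.of_forall fun x => ?_)
  · exact (((integrable_one_add_mul_abs_sub_rpow_neg hθ (by linarith : 1 < k + 1) a').const_mul
      _).const_mul _).integrableOn
  · dsimp only
    rw [mul_left_comm]
    gcongr
    exact one_add_mul_abs_sub_rpow_neg_le hθ.le (by linarith) haa' x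

/-- The Randomized DP Laplace mechanism whose reciprocal scale is Gamma-distributed with
shape `k` and scale `θ` satisfies `(k+1)·ln(1 + Δq·θ)`-differential privacy: probabilities
change by a factor of at most `(1 + Δq·θ)^{k+1}` under shifts of size at most `Δq`. -/
theorem gamma_mixture_laplace_dp
    (k θ Δq : ℝ) (hk : 0 < k) (hθ : 0 < θ) (hΔq : 0 < Δq)
    (fΓ : ℝ → ℝ)
    (hfΓ : ∀ ε : ℝ, 0 < ε →
      fΓ ε = ε ^ (k - 1) * Real.exp (-(ε / θ)) / (Real.Gamma k * θ ^ k))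
    (g : ℝ → ℝ)
    (hg : ∀ x : ℝ, g x = ∫ ε in Set.Ioi (0 : ℝ), fΓ ε * ((ε / 2) * Real.exp (-(ε * |x|)))) :
    ∀ S : Set ℝ, MeasurableSet S → ∀ a a' : ℝ, |a - a'| ≤ Δq →
      ∫ x in S, g (x - a) ≤ (1 + Δq * θ) ^ (k + 1) * ∫ x in S, g (x - a') :=
  gamma_mixture_laplace_dp_general k θ Δq hk hθ fΓ hfΓ g hg
end

section
/- Let 0 < a < b, Δq > 0, and let f_U(ε) = 1/(b−a) for ε ∈ [a,b] and 0 otherwise be the uniform density U(a,b). Let g(x) = ∫_a^b f_U(ε)·(ε/2)·exp(−ε·|x|) dε be the corresponding mixture Laplace density, and set α = a·Δq and β = b·Δq. Then the mechanism is ε₀-differentially private with ε₀ = ln[ (α² − β²) / ( 2·((1+β)·exp(−β) − (1+α)·exp(−α)) ) ]: for every measurable set S ⊆ ℝ and all shifts a₁, a₂ ∈ ℝ with |a₁ − a₂| ≤ Δq, ∫_S g(x − a₁) dx ≤ exp(ε₀) · ∫_S g(x − a₂) dx. -/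
/-!
Writing `φ(t) = ∫_a^b ε e^{-εt} dε` (`mixtureProfile a b t`), the mixture density is
`g(x) = φ(|x|) / (2(b - a))`. The map `φ` is decreasing, and since `ε ↦ e^{-εt}` and `ε ↦ e^{-εs}` are similarly ordered,
Chebyshev's integral inequality for the measure `ε dε` on `[a, b]` gives
`φ(t) φ(s) ≤ φ(0) φ(t + s)`. With `|x - a₂| ≤ |x - a₁| + Δq` this bounds
`g(x - a₁) / g(x - a₂)` pointwise by `φ(0) / φ(Δq)`, which integrates to `e^{ε₀}`.
-/

open MeasureTheory Real Set

section Chebyshev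

variable {α : Type*} [MeasurableSpace α] {μ : Measure α} [IsFiniteMeasure μ] {f g : α → ℝ}

theorem integral_mul_integral_le_of_monovary (hfg : Monovary f g) (hf : Integrable f μ)
    (hg : Integrable g μ) (hfg_int : Integrable (fun x => f x * g x) μ) :
    (∫ x, f x ∂μ) * ∫ x, g x ∂μ ≤ μ.real univ * ∫ x, f x * g x ∂μ := by
  set F := ∫ x, f x ∂μ
  set G := ∫ x, g x ∂μ
  set H := ∫ x, f x * g x ∂μ
  have inner (x : α) : ∫ y, (f y - f x) * (g y - g x) ∂μ
      = H - g x * F - f x * G + μ.real univ * (f x * g x) := by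
    have expand : (fun y => (f y - f x) * (g y - g x))
        = fun y => f y * g y - g x * f y - f x * g y + f x * g x := by
      ext y; ring
    rw [expand, integral_add (by fun_prop) (by fun_prop), integral_sub (by fun_prop) (by fun_prop),
      integral_sub (by fun_prop) (by fun_prop), integral_const, integral_const_mul,
      integral_const_mul, smul_eq_mul]
  have double_integral_nonneg : 0 ≤ ∫ x, ∫ y, (f y - f x) * (g y - g x) ∂μ ∂μ :=
    integral_nonneg fun x => integral_nonneg fun y => hfg.sub_mul_sub_nonneg x y
  simp_rw [inner] at double_integral_nonneg
  rw [integral_add (by fun_prop) (by fun_prop), integral_sub (by fun_prop) (by fun_prop),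
    integral_sub (by fun_prop) (by fun_prop), integral_const, integral_const_mul,
    integral_mul_const, integral_mul_const, smul_eq_mul] at double_integral_nonneg
  linarith [mul_comm F G]

end Chebyshev

theorem antitone_exp_neg_mul {t : ℝ} (ht : 0 ≤ t) : Antitone fun ε : ℝ => exp (-(ε * t)) :=
  fun _ _ h => exp_le_exp.2 (neg_le_neg (mul_le_mul_of_nonneg_right h ht))

theorem integrable_exp_neg_mul_abs {a : ℝ} (ha : 0 < a) :
    Integrable fun x : ℝ => exp (-(a * |x|)) := by
  have on_Ici : IntegrableOn (fun x : ℝ => exp (-(a * |x|))) (Ici 0) :=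
    (Iff.mpr integrableOn_Ici_iff_integrableOn_Ioi (exp_neg_integrableOn_Ioi 0 ha)).congr_fun
      (fun x hx => by simp only [abs_of_nonneg (show (0 : ℝ) ≤ x from hx), neg_mul])
      measurableSet_Ici
  have on_Iic : IntegrableOn (fun x : ℝ => exp (-(a * |x|))) (Iic 0) := by
    simpa using on_Ici.comp_neg
  rw [← integrableOn_univ, ← Iic_union_Ici]
  exact on_Iic.union on_Ici

noncomputable def mixtureProfile (a b t : ℝ) : ℝ := ∫ ε in Icc a b, ε * exp (-(ε * t))

section MixtureProfile

variable {a b : ℝ}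

theorem mixtureProfile_eq_intervalIntegral (hab : a ≤ b) (t : ℝ) :
    mixtureProfile a b t = ∫ ε in a..b, ε * exp (-(ε * t)) := by
  rw [mixtureProfile, integral_Icc_eq_integral_Ioc, intervalIntegral.integral_of_le hab]

theorem mixtureProfile_pos (ha : 0 ≤ a) (hab : a < b) (t : ℝ) : 0 < mixtureProfile a b t := by
  rw [mixtureProfile_eq_intervalIntegral hab.le]
  exact intervalIntegral.intervalIntegral_pos_of_pos_on
    ((by fun_prop : Continuous fun ε : ℝ => ε * exp (-(ε * t))).intervalIntegrable a b)
    (fun ε hε => mul_pos (ha.trans_lt hε.1) (exp_pos _)) hab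

theorem mixtureProfile_antitone (ha : 0 ≤ a) : Antitone (mixtureProfile a b) := by
  intro t s hts
  refine setIntegral_mono_on (by fun_prop : Continuous _).integrableOn_Icc
    (by fun_prop : Continuous _).integrableOn_Icc measurableSet_Icc fun ε hε => ?_
  have hε₀ : 0 ≤ ε := ha.trans hε.1
  gcongr

theorem norm_mixtureProfile_le (ha : 0 ≤ a) (hab : a ≤ b) {t : ℝ} (ht : 0 ≤ t) :
    ‖mixtureProfile a b t‖ ≤ b * exp (-(a * t)) * (b - a) := by
  rw [← volume_real_Icc_of_le hab]
  refine norm_setIntegral_le_of_norm_le_const measure_Icc_lt_top fun ε hε => ?_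
  have hε₀ : 0 ≤ ε := ha.trans hε.1
  rw [norm_mul, norm_of_nonneg hε₀, norm_of_nonneg (exp_pos _).le]
  gcongr
  exacts [hε₀.trans hε.2, hε.2, hε.1]

theorem integrable_mixtureProfile_abs (ha : 0 < a) (hab : a ≤ b) :
    Integrable fun x : ℝ => mixtureProfile a b |x| :=
  (((integrable_exp_neg_mul_abs ha).const_mul b).mul_const (b - a)).mono'
    ((mixtureProfile_antitone ha.le).measurable.comp measurable_abs).aestronglyMeasurable
    (ae_of_all _ fun x => norm_mixtureProfile_le ha.le hab (abs_nonneg x))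

theorem mixtureProfile_zero (hab : a ≤ b) : mixtureProfile a b 0 = (b ^ 2 - a ^ 2) / 2 := by
  simp [mixtureProfile_eq_intervalIntegral hab, integral_id]

theorem mixtureProfile_of_pos (hab : a ≤ b) {t : ℝ} (ht : 0 < t) :
    mixtureProfile a b t
      = ((1 + a * t) * exp (-(a * t)) - (1 + b * t) * exp (-(b * t))) / t ^ 2 := by
  have antideriv (ε : ℝ) : HasDerivAt (fun ε => -((1 + ε * t) * exp (-(ε * t))) / t ^ 2)
      (ε * exp (-(ε * t))) ε := by
    have h₁ : HasDerivAt (fun ε => 1 + ε * t) t ε := (hasDerivAt_mul_const t).const_add 1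
    have h₂ : HasDerivAt (fun ε => exp (-(ε * t))) (exp (-(ε * t)) * -t) ε :=
      (hasDerivAt_mul_const t).neg.exp
    refine ((h₁.mul h₂).neg.div_const (t ^ 2)).congr_deriv ?_
    rw [div_eq_iff (by positivity)]
    ring
  rw [mixtureProfile_eq_intervalIntegral hab, intervalIntegral.integral_eq_sub_of_hasDerivAt
    (fun ε _ => antideriv ε)
    ((by fun_prop : Continuous fun ε : ℝ => ε * exp (-(ε * t))).intervalIntegrable a b)]
  ring

theorem mixtureProfile_zero_div (hab : a ≤ b) {t : ℝ} (ht : 0 < t) :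
    mixtureProfile a b 0 / mixtureProfile a b t = ((a * t) ^ 2 - (b * t) ^ 2)
      / (2 * ((1 + b * t) * exp (-(b * t)) - (1 + a * t) * exp (-(a * t)))) := by
  rw [mixtureProfile_zero hab, mixtureProfile_of_pos hab ht, div_div_eq_mul_div,
    ← neg_sub ((1 + a * t) * exp (-(a * t))), mul_neg, div_neg, ← div_div]
  ring

theorem mixtureProfile_mul_le (ha : 0 ≤ a) {t s : ℝ} (ht : 0 ≤ t) (hs : 0 ≤ s) :
    mixtureProfile a b t * mixtureProfile a b s
      ≤ mixtureProfile a b 0 * mixtureProfile a b (t + s) := by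
  set ν := (volume.restrict (Icc a b)).withDensity fun ε => ENNReal.ofReal ε
  have : IsFiniteMeasure ν :=
    isFiniteMeasure_withDensity_ofReal continuous_id.integrableOn_Icc.hasFiniteIntegral
  have density_lt_top : ∀ᵐ ε ∂volume.restrict (Icc a b), ENNReal.ofReal ε < ⊤ :=
    ae_of_all _ fun _ => ENNReal.ofReal_lt_top
  have integrable (u : ℝ) : Integrable (fun ε => exp (-(ε * u))) ν := by
    rw [integrable_withDensity_iff_integrable_smul' ENNReal.measurable_ofReal density_lt_top]
    simp only [ENNReal.toReal_ofReal', smul_eq_mul]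
    exact (by fun_prop : Continuous fun ε : ℝ => max ε 0 * exp (-(ε * u))).integrableOn_Icc
  have integral_eq (u : ℝ) : ∫ ε, exp (-(ε * u)) ∂ν = mixtureProfile a b u := by
    rw [integral_withDensity_eq_integral_toReal_smul ENNReal.measurable_ofReal density_lt_top]
    exact setIntegral_congr_fun measurableSet_Icc fun ε hε => by
      rw [ENNReal.toReal_ofReal (ha.trans hε.1), smul_eq_mul]
  have chebyshev := integral_mul_integral_le_of_monovary
    ((antitone_exp_neg_mul ht).monovary (antitone_exp_neg_mul hs)) (integrable t) (integrable s)
    (by simpa only [← exp_add, ← neg_add, ← mul_add] using integrable (t + s))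
  simp only [← exp_add, ← neg_add, ← mul_add, integral_eq] at chebyshev
  simpa [← integral_eq 0] using chebyshev

theorem mixtureProfile_le_div_mul (ha : 0 ≤ a) (hab : a < b) {u v Δ : ℝ} (hu : 0 ≤ u)
    (hΔ : 0 ≤ Δ) (hv : v ≤ u + Δ) :
    mixtureProfile a b u ≤ mixtureProfile a b 0 / mixtureProfile a b Δ * mixtureProfile a b v := by
  rw [div_mul_eq_mul_div, le_div_iff₀ (mixtureProfile_pos ha hab Δ)]
  calc mixtureProfile a b u * mixtureProfile a b Δ
      ≤ mixtureProfile a b 0 * mixtureProfile a b (u + Δ) := mixtureProfile_mul_le ha hu hΔ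
    _ ≤ mixtureProfile a b 0 * mixtureProfile a b v :=
      mul_le_mul_of_nonneg_left (mixtureProfile_antitone ha hv) (mixtureProfile_pos ha hab 0).le

end MixtureProfile

/-- The Randomized DP Laplace mechanism whose reciprocal scale is uniformly distributed
on `[a, b]` is `ln[ (α² − β²) / (2·((1+β)e^{−β} − (1+α)e^{−α})) ]`-differentially private,
where `α = a·Δq` and `β = b·Δq`. -/
theorem uniform_mixture_laplace_dp
    (a b Δq : ℝ) (ha : 0 < a) (hab : a < b) (hΔq : 0 < Δq)
    (fU : ℝ → ℝ)
    (hfU : ∀ ε : ℝ, fU ε = if ε ∈ Set.Icc a b then 1 / (b - a) else 0)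
    (g : ℝ → ℝ)
    (hg : ∀ x : ℝ, g x = ∫ ε in Set.Icc a b, fU ε * ((ε / 2) * Real.exp (-(ε * |x|))))
    (α β : ℝ) (hα : α = a * Δq) (hβ : β = b * Δq)
    (ε₀ : ℝ)
    (hε₀ : ε₀ = Real.log ((α ^ 2 - β ^ 2) /
      (2 * ((1 + β) * Real.exp (-β) - (1 + α) * Real.exp (-α))))) :
    ∀ S : Set ℝ, MeasurableSet S → ∀ a₁ a₂ : ℝ, |a₁ - a₂| ≤ Δq →
      ∫ x in S, g (x - a₁) ≤ Real.exp ε₀ * ∫ x in S, g (x - a₂) := by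
  intro S hS a₁ a₂ hdist
  have g_eq : g = fun x => mixtureProfile a b |x| / (2 * (b - a)) := by
    ext x
    rw [hg, mixtureProfile, ← integral_div]
    refine setIntegral_congr_fun measurableSet_Icc fun ε hε => ?_
    rw [hfU, if_pos hε]
    field_simp [(sub_pos.2 hab).ne']
  have exp_ε₀ : exp ε₀ = mixtureProfile a b 0 / mixtureProfile a b Δq := by
    rw [hε₀, hα, hβ, ← mixtureProfile_zero_div hab.le hΔq,
      exp_log (div_pos (mixtureProfile_pos ha.le hab 0) (mixtureProfile_pos ha.le hab Δq))]
  have pointwise (x : ℝ) : g (x - a₁) ≤ exp ε₀ * g (x - a₂) := by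
    simp only [g_eq, exp_ε₀, mul_div_assoc']
    gcongr
    exact mixtureProfile_le_div_mul ha.le hab (abs_nonneg _) hΔq.le
      ((abs_sub_le x a₁ a₂).trans (by gcongr))
  have g_integrable : Integrable g :=
    g_eq ▸ (integrable_mixtureProfile_abs ha hab.le).div_const _
  calc ∫ x in S, g (x - a₁)
      ≤ ∫ x in S, exp ε₀ * g (x - a₂) :=
        setIntegral_mono_on (g_integrable.comp_sub_right a₁).integrableOn
          ((g_integrable.comp_sub_right a₂).const_mul _).integrableOn hS fun x _ => pointwise x
    _ = exp ε₀ * ∫ x in S, g (x - a₂) := integral_const_mul _ _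
end
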